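/- arXiv:1306.3753 — 2 statements merged into one kernel-verified Lean document; each statement's English description precedes it below -/
import Mathlib

section
/- On S^n × ℝ with the causal relation (x,t) ≤ (x',t') iff d(x,x') ≤ t' - t, for every pair of points p ≤ q the causal diamond J⁺(p) ∩ J⁻(q) = {r : p ≤ r ≤ q} is a compact subset of S^n × ℝ. -/
/-!
Since the round distance is nonnegative, every `r` with `p ≤ r ≤ q` has time coordinate in
`[p.2, q.2]`; since it is continuous, the causal relation is closed. The diamond is therefore a
closed subset of the compact set `Sⁿ × [p.2, q.2]`.
-/

/-- The unit sphere `Sⁿ` in `ℝ^{n+1}`. -/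
abbrev Sph (n : ℕ) := Metric.sphere (0 : EuclideanSpace ℝ (Fin (n+1))) 1

/-- The round (geodesic) distance on the unit sphere: `arccos ⟪x, y⟫`. -/
noncomputable def sphereDist {n : ℕ} (x y : Sph n) : ℝ :=
  Real.arccos ((inner ℝ (x : EuclideanSpace ℝ (Fin (n+1))) (y : EuclideanSpace ℝ (Fin (n+1)))) : ℝ)

/-- The causal relation of the universal cover of Einstein space-time `Sⁿ × ℝ`. -/
noncomputable def causalLe {n : ℕ} (p q : Sph n × ℝ) : Prop :=
  sphereDist p.1 q.1 ≤ q.2 - p.2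

/-- The chronological relation of the universal cover of Einstein space-time. -/
noncomputable def chronLt {n : ℕ} (p q : Sph n × ℝ) : Prop :=
  sphereDist p.1 q.1 < q.2 - p.2

theorem sphereDist_nonneg {n : ℕ} (x y : Sph n) : 0 ≤ sphereDist x y :=
  Real.arccos_nonneg _

theorem Continuous.sphereDist {α : Type*} [TopologicalSpace α] {n : ℕ} {f g : α → Sph n}
    (hf : Continuous f) (hg : Continuous g) : Continuous fun a => sphereDist (f a) (g a) :=
  Real.continuous_arccos.comp <|
    (continuous_subtype_val.comp hf).inner (continuous_subtype_val.comp hg)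

theorem isClosed_setOf_causalLe {n : ℕ} :
    IsClosed {pq : (Sph n × ℝ) × (Sph n × ℝ) | causalLe pq.1 pq.2} :=
  isClosed_le (continuous_fst.fst.sphereDist continuous_snd.fst) (by fun_prop)

theorem snd_le_snd_of_causalLe {n : ℕ} {p q : Sph n × ℝ} (h : causalLe p q) : p.2 ≤ q.2 := by
  have := sphereDist_nonneg p.1 q.1
  unfold causalLe at h
  linarith

theorem stmt1_general (n : ℕ) (p q : Sph n × ℝ) :
    IsCompact {r : Sph n × ℝ | causalLe p r ∧ causalLe r q} := by
  have hclosed : IsClosed {r : Sph n × ℝ | causalLe p r ∧ causalLe r q} :=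
    (isClosed_setOf_causalLe.preimage (by fun_prop : Continuous fun r => (p, r))).inter
      (isClosed_setOf_causalLe.preimage (by fun_prop : Continuous fun r => (r, q)))
  have hsub : {r : Sph n × ℝ | causalLe p r ∧ causalLe r q} ⊆ Set.univ ×ˢ Set.Icc p.2 q.2 :=
    fun r ⟨hpr, hrq⟩ => ⟨trivial, snd_le_snd_of_causalLe hpr, snd_le_snd_of_causalLe hrq⟩
  exact (isCompact_univ.prod isCompact_Icc).of_isClosed_subset hclosed hsub

/-- Causal diamonds of `Sⁿ × ℝ` are compact (global hyperbolicity of `Ẽin`). -/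
theorem stmt1 (n : ℕ) (p q : Sph n × ℝ) (hpq : causalLe p q) :
    IsCompact {r : Sph n × ℝ | causalLe p r ∧ causalLe r q} :=
  stmt1_general n p q
end

section
/- Let c : I → S^n × ℝ, c(t) = (x(t), t), with x : I → S^n a 1-Lipschitz map on an interval I ⊆ ℝ. If x is not strictly 1-Lipschitz between two parameters a < b in I (i.e., d(x(a), x(b)) = b − a), then the image of x restricted to [a,b] lies on a minimizing geodesic arc of S^n, and d(x(a), x(s)) = s − a for all s in [a,b]. -/
open InnerProductGeometry

section Extremal

variable {α : Type*} {d : α → α → ℝ} {γ : ℝ → α} {a b : ℝ}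

theorem dist_left_eq_sub_of_dist_endpoints_eq
    (d_triangle : ∀ u v w, d u w ≤ d u v + d v w)
    (hLip : ∀ s ∈ Set.Icc a b, ∀ t ∈ Set.Icc a b, d (γ s) (γ t) ≤ |s - t|)
    (heq : d (γ a) (γ b) = b - a) {s : ℝ} (hs : s ∈ Set.Icc a b) :
    d (γ a) (γ s) = s - a := by
  have ha : a ∈ Set.Icc a b := ⟨le_rfl, hs.1.trans hs.2⟩
  have hb : b ∈ Set.Icc a b := ⟨hs.1.trans hs.2, le_rfl⟩
  have h_as : d (γ a) (γ s) ≤ s - a := by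
    simpa only [abs_sub_comm a, abs_of_nonneg (sub_nonneg.2 hs.1)] using hLip a ha s hs
  have h_sb : d (γ s) (γ b) ≤ b - s := by
    simpa only [abs_sub_comm s, abs_of_nonneg (sub_nonneg.2 hs.2)] using hLip s hs b hb
  linarith [d_triangle (γ a) (γ s) (γ b)]

theorem dist_eq_abs_sub_of_dist_endpoints_eq
    (d_comm : ∀ u v, d u v = d v u) (d_triangle : ∀ u v w, d u w ≤ d u v + d v w)
    (hLip : ∀ s ∈ Set.Icc a b, ∀ t ∈ Set.Icc a b, d (γ s) (γ t) ≤ |s - t|)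
    (heq : d (γ a) (γ b) = b - a) {s t : ℝ} (hs : s ∈ Set.Icc a b) (ht : t ∈ Set.Icc a b) :
    d (γ s) (γ t) = |s - t| := by
  wlog hst : s ≤ t generalizing s t
  · rw [d_comm, abs_sub_comm]
    exact this ht hs (le_of_not_ge hst)
  have h_st : d (γ s) (γ t) ≤ t - s := by
    simpa only [abs_sub_comm s, abs_of_nonneg (sub_nonneg.2 hst)] using hLip s hs t ht
  rw [abs_sub_comm, abs_of_nonneg (sub_nonneg.2 hst)]
  linarith [d_triangle (γ a) (γ s) (γ t),
    dist_left_eq_sub_of_dist_endpoints_eq d_triangle hLip heq hs,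
    dist_left_eq_sub_of_dist_endpoints_eq d_triangle hLip heq ht]

end Extremal

section Sphere

variable {n : ℕ}

theorem sphereDist_eq_angle (x y : Sph n) :
    sphereDist x y = angle (x : EuclideanSpace ℝ (Fin (n+1))) y := by
  simp [sphereDist, angle]

theorem sphereDist_comm (x y : Sph n) : sphereDist x y = sphereDist y x := by
  simp only [sphereDist_eq_angle, angle_comm]

theorem sphereDist_triangle (x y z : Sph n) :
    sphereDist x z ≤ sphereDist x y + sphereDist y z := by
  simp only [sphereDist_eq_angle]
  exact angle_le_angle_add_angle _ _ _

end Sphere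

theorem stmt3_general (n : ℕ) (I : Set ℝ) (hI : I.OrdConnected) (x : ℝ → Sph n)
    (hLip : ∀ s ∈ I, ∀ t ∈ I, sphereDist (x s) (x t) ≤ |s - t|)
    (a b : ℝ) (ha : a ∈ I) (hb : b ∈ I)
    (heq : sphereDist (x a) (x b) = b - a) :
    (∀ s ∈ Set.Icc a b, ∀ t ∈ Set.Icc a b, sphereDist (x s) (x t) = |s - t|) ∧
    (∀ s ∈ Set.Icc a b, sphereDist (x a) (x s) = s - a) := by
  have hIcc : Set.Icc a b ⊆ I := hI.out ha hb
  have hLip' : ∀ s ∈ Set.Icc a b, ∀ t ∈ Set.Icc a b, sphereDist (x s) (x t) ≤ |s - t| :=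
    fun s hs t ht => hLip s (hIcc hs) t (hIcc ht)
  exact ⟨fun s hs t ht => dist_eq_abs_sub_of_dist_endpoints_eq sphereDist_comm
      sphereDist_triangle hLip' heq hs ht,
    fun s hs => dist_left_eq_sub_of_dist_endpoints_eq sphereDist_triangle hLip' heq hs⟩

/-- A causal curve realizing equality of the causal inequality is a lightlike geodesic:
if a `1`-Lipschitz map `x : I → Sⁿ` satisfies `d(x a, x b) = b - a` for some `a < b`,
then on `[a,b]` it is a unit-speed minimizing geodesic arc, and
`d(x a, x s) = s - a` for all `s ∈ [a,b]`. -/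
theorem stmt3 (n : ℕ) (I : Set ℝ) (hI : I.OrdConnected) (x : ℝ → Sph n)
    (hLip : ∀ s ∈ I, ∀ t ∈ I, sphereDist (x s) (x t) ≤ |s - t|)
    (a b : ℝ) (ha : a ∈ I) (hb : b ∈ I) (hab : a < b)
    (heq : sphereDist (x a) (x b) = b - a) :
    (∀ s ∈ Set.Icc a b, ∀ t ∈ Set.Icc a b, sphereDist (x s) (x t) = |s - t|) ∧
    (∀ s ∈ Set.Icc a b, sphereDist (x a) (x s) = s - a) :=
  stmt3_general n I hI x hLip a b ha hb heq
end
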